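/- Let l ≥ 3 and n = 2^l − 1. Then dil(S_n, XT_l) = l − 1: every bijection from the vertices of the star S_n to the vertices of the X-tree XT_l has some edge of S_n whose endpoint images are at distance at least l − 1 in XT_l, and there exists a bijection under which every edge of S_n maps to a pair of vertices at distance at most l − 1 in XT_l. -/

import Mathlib

open SimpleGraph

/-- Star graph `K_{1,n-1}` on `Fin n`, centre `0`. -/
def starGraph (n : ℕ) : SimpleGraph (Fin n) where
  Adj x y := x ≠ y ∧ (x.val = 0 ∨ y.val = 0)
  symm := by constructor; rintro x y ⟨h1, h2⟩; exact ⟨h1.symm, by tauto⟩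
  loopless := by constructor; rintro x ⟨h1, -⟩; exact h1 rfl

/-- Adjacency of X-tree labels: binary tree edges plus edges between consecutive
labels on the same level (the level of label `a` is `Nat.log 2 a + 1`). -/
def xtAdjLbl (a b : ℕ) : Prop :=
  (b = 2 * a ∨ b = 2 * a + 1 ∨ a = 2 * b ∨ a = 2 * b + 1) ∨
  (b = a + 1 ∧ Nat.log 2 a = Nat.log 2 b) ∨ (a = b + 1 ∧ Nat.log 2 a = Nat.log 2 b)

/-- The X-tree `XT_l` on `Fin (2^l - 1)`; vertex `x` has label `x+1`. -/
def xTree (l : ℕ) : SimpleGraph (Fin (2 ^ l - 1)) where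
  Adj x y := xtAdjLbl (x.val + 1) (y.val + 1)
  symm := by
    constructor
    rintro x y (h | ⟨h1, h2⟩ | ⟨h1, h2⟩)
    · left; tauto
    · right; right; exact ⟨h1, h2.symm⟩
    · right; left; exact ⟨h1, h2.symm⟩
  loopless := by
    constructor
    rintro x (h | ⟨h1, -⟩ | ⟨h1, -⟩) <;> omega

/-!
Sending the centre of the star to the root gives dilation `l - 1`, the depth of the tree.
Conversely, the leftmost leaf `2^(l-1)` and the rightmost leaf `2^l - 1` are at distance at
least `2l - 3`, so by the triangle inequality one of them is at distance at least `l - 1` from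
the image of the centre. The distance bound comes from the potential
`ψ a = log₂ C(p + 2, 2) - log₂ a`, where `p = a - 2^⌊log₂ a⌋` is the offset of the label `a`
within its level: `ψ` changes by at most one along every edge of the X-tree, and it equals
`-(l - 1)` at the leftmost leaf and `l - 2` at the rightmost one.
-/

theorem Nat.log_le_log_add_of_lt_pow_mul {b x y j : ℕ} (hb : 1 < b) (h : y < b ^ j * (x + 1)) :
    Nat.log b y ≤ Nat.log b x + j := by
  rcases Nat.eq_zero_or_pos y with rfl | hy
  · simp
  refine Nat.lt_succ_iff.mp (Nat.log_lt_of_lt_pow hy.ne' (h.trans_le ?_))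
  rw [Nat.succ_eq_add_one, add_right_comm, pow_add _ _ j, mul_comm]
  exact Nat.mul_le_mul_right _ (Nat.lt_pow_succ_log_self hb x)

theorem SimpleGraph.Walk.abs_sub_le_length {V : Type*} {G : SimpleGraph V} (f : V → ℤ)
    (hf : ∀ u v, G.Adj u v → |f u - f v| ≤ 1) {u v : V} (p : G.Walk u v) :
    |f u - f v| ≤ p.length := by
  induction p with
  | nil => simp
  | @cons u w v huw p ih =>
    calc |f u - f v| ≤ |f u - f w| + |f w - f v| := abs_sub_le _ _ _
      _ ≤ ((p.cons huw).length : ℤ) := by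
        rw [Walk.length_cons]; push_cast; linarith [hf u w huw]

theorem SimpleGraph.Reachable.abs_sub_le_dist {V : Type*} {G : SimpleGraph V} (f : V → ℤ)
    (hf : ∀ u v, G.Adj u v → |f u - f v| ≤ 1) {u v : V} (h : G.Reachable u v) :
    |f u - f v| ≤ G.dist u v := by
  obtain ⟨p, hp⟩ := h.exists_walk_length_eq_dist
  exact hp ▸ p.abs_sub_le_length f hf

theorem SimpleGraph.Connected.le_dist_or_le_dist {V : Type*} {G : SimpleGraph V}
    (hG : G.Connected) {k : ℕ} {u v : V} (h : 2 * k ≤ G.dist u v + 1) (w : V) :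
    k ≤ G.dist w u ∨ k ≤ G.dist w v := by
  have := hG.dist_triangle (u := u) (v := w) (w := v)
  rw [G.dist_comm (u := u) (v := w)] at this
  omega

def offsetWeight (p : ℕ) : ℕ := Nat.log 2 ((p + 2).choose 2)

theorem two_mul_choose_two_add_two (p : ℕ) : 2 * (p + 2).choose 2 = (p + 2) * (p + 1) := by
  rw [mul_comm, ← Nat.add_one_mul_choose_eq (p + 1) 1, Nat.choose_one_right]

theorem offsetWeight_mono : Monotone offsetWeight := fun _ _ h =>
  Nat.log_mono_right (Nat.choose_le_choose 2 (by omega))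

theorem offsetWeight_succ_le (p : ℕ) : offsetWeight (p + 1) ≤ offsetWeight p + 1 := by
  refine Nat.log_le_log_add_of_lt_pow_mul (by norm_num) ?_
  have h₀ := two_mul_choose_two_add_two p
  have h₁ := two_mul_choose_two_add_two (p + 1)
  nlinarith

theorem offsetWeight_two_mul_add_one_le (p : ℕ) :
    offsetWeight (2 * p + 1) ≤ offsetWeight p + 2 := by
  refine Nat.log_le_log_add_of_lt_pow_mul (by norm_num) ?_
  have h₀ := two_mul_choose_two_add_two p
  have h₁ := two_mul_choose_two_add_two (2 * p + 1)
  nlinarith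

theorem offsetWeight_two_pow_sub_one {m : ℕ} (hm : 1 ≤ m) :
    offsetWeight (2 ^ m - 1) = 2 * m - 1 := by
  obtain ⟨k, rfl⟩ := Nat.exists_eq_add_of_le' hm
  have hk : 1 ≤ 2 ^ k := Nat.one_le_two_pow
  have hexp : 2 * (k + 1) - 1 = 2 * k + 1 := by omega
  have hsq : 2 ^ (2 * k) = 2 ^ k * 2 ^ k := by rw [← pow_add, two_mul]
  have h := two_mul_choose_two_add_two (2 ^ (k + 1) - 1)
  rw [show 2 ^ (k + 1) - 1 + 2 = 2 * 2 ^ k + 1 by rw [pow_succ]; omega,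
    show 2 ^ (k + 1) - 1 + 1 = 2 * 2 ^ k by rw [pow_succ]; omega] at h
  unfold offsetWeight
  rw [show 2 ^ (k + 1) - 1 + 2 = 2 * 2 ^ k + 1 by rw [pow_succ]; omega, hexp]
  refine Nat.log_eq_of_pow_le_of_lt_pow ?_ ?_
  · rw [pow_succ, hsq]; nlinarith
  · rw [show 2 * k + 1 + 1 = 2 * k + 2 by ring, pow_add, hsq]; nlinarith

def xtPotential (a : ℕ) : ℤ := offsetWeight (a - 2 ^ Nat.log 2 a) - Nat.log 2 a

theorem abs_xtPotential_sub_half_le {c : ℕ} (hc : 2 ≤ c) :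
    |xtPotential c - xtPotential (c / 2)| ≤ 1 := by
  have hlog : Nat.log 2 c = Nat.log 2 (c / 2) + 1 := Nat.log_of_one_lt_of_le (by norm_num) hc
  have hpow : 2 ^ Nat.log 2 (c / 2) ≤ c / 2 := Nat.pow_log_le_self 2 (by omega)
  set q := c / 2 - 2 ^ Nat.log 2 (c / 2)
  have hoff : c - 2 ^ Nat.log 2 c = 2 * q + c % 2 := by rw [hlog, pow_succ]; omega
  have hlow : offsetWeight q ≤ offsetWeight (2 * q + c % 2) := offsetWeight_mono (by omega)
  have hup : offsetWeight (2 * q + c % 2) ≤ offsetWeight q + 2 :=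
    (offsetWeight_mono (by omega)).trans (offsetWeight_two_mul_add_one_le q)
  unfold xtPotential
  rw [hoff, hlog, abs_le]
  push_cast
  constructor <;> linarith

theorem abs_xtPotential_succ_sub_le {a : ℕ} (ha : 0 < a) (h : Nat.log 2 (a + 1) = Nat.log 2 a) :
    |xtPotential (a + 1) - xtPotential a| ≤ 1 := by
  have hpow : 2 ^ Nat.log 2 a ≤ a := Nat.pow_log_le_self 2 ha.ne'
  have hoff : a + 1 - 2 ^ Nat.log 2 a = a - 2 ^ Nat.log 2 a + 1 := by omega
  have hlow := offsetWeight_mono (Nat.le_succ (a - 2 ^ Nat.log 2 a))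
  have hup := offsetWeight_succ_le (a - 2 ^ Nat.log 2 a)
  unfold xtPotential
  rw [h, hoff, abs_le]
  constructor <;> linarith [(Nat.cast_le (α := ℤ)).2 hlow, (Nat.cast_le (α := ℤ)).2 hup]

theorem abs_xtPotential_sub_le_of_xtAdjLbl {a b : ℕ} (ha : 0 < a) (hb : 0 < b)
    (h : xtAdjLbl a b) : |xtPotential a - xtPotential b| ≤ 1 := by
  rcases h with (rfl | rfl | rfl | rfl) | ⟨rfl, hlog⟩ | ⟨rfl, hlog⟩
  · simpa [abs_sub_comm] using abs_xtPotential_sub_half_le (c := 2 * a) (by omega)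
  · simpa [abs_sub_comm, Nat.mul_add_div] using
      abs_xtPotential_sub_half_le (c := 2 * a + 1) (by omega)
  · simpa using abs_xtPotential_sub_half_le (c := 2 * b) (by omega)
  · simpa [Nat.mul_add_div] using abs_xtPotential_sub_half_le (c := 2 * b + 1) (by omega)
  · rw [abs_sub_comm]; exact abs_xtPotential_succ_sub_le ha hlog.symm
  · exact abs_xtPotential_succ_sub_le hb hlog

namespace xTree

variable {l : ℕ}

theorem exists_walk_to_root (h : 0 < 2 ^ l - 1) (x : Fin (2 ^ l - 1)) :
    ∃ p : (xTree l).Walk x ⟨0, h⟩, p.length = Nat.log 2 (x.val + 1) := by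
  induction x using WellFoundedLT.induction with
  | _ x ih =>
    rcases Nat.eq_zero_or_pos x.val with hx | hx
    · obtain rfl : x = ⟨0, h⟩ := Fin.ext hx
      exact ⟨Walk.nil, by simp⟩
    let y : Fin (2 ^ l - 1) := ⟨(x.val + 1) / 2 - 1, by omega⟩
    have hy : y.val + 1 = (x.val + 1) / 2 := by simp only [y]; omega
    have hadj : (xTree l).Adj x y := by
      show xtAdjLbl (x.val + 1) (y.val + 1)
      rw [hy]; left; omega
    obtain ⟨p, hp⟩ := ih y (Fin.lt_def.2 (by simp only [y]; omega))
    refine ⟨p.cons hadj, ?_⟩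
    rw [Walk.length_cons, hp, hy, Nat.log_div_base]
    have : 0 < Nat.log 2 (x.val + 1) := Nat.log_pos (by norm_num) (by omega)
    omega

theorem connected (h : 0 < 2 ^ l - 1) : (xTree l).Connected := by
  have : Nonempty (Fin (2 ^ l - 1)) := ⟨⟨0, h⟩⟩
  refine Connected.mk fun x y => ?_
  obtain ⟨p, -⟩ := exists_walk_to_root h x
  obtain ⟨q, -⟩ := exists_walk_to_root h y
  exact ⟨p.append q.reverse⟩

theorem dist_root_le (h : 0 < 2 ^ l - 1) (x : Fin (2 ^ l - 1)) :
    (xTree l).dist ⟨0, h⟩ x ≤ l - 1 := by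
  obtain ⟨p, hp⟩ := exists_walk_to_root h x
  have hlog : Nat.log 2 (x.val + 1) < l :=
    Nat.log_lt_of_lt_pow (by omega) (by omega)
  rw [dist_comm]
  exact (dist_le p).trans (by omega)

theorem abs_xtPotential_sub_le_dist (h : 0 < 2 ^ l - 1) (x y : Fin (2 ^ l - 1)) :
    |xtPotential (x.val + 1) - xtPotential (y.val + 1)| ≤ (xTree l).dist x y := by
  have hf : ∀ u v, (xTree l).Adj u v →
      |xtPotential (u.val + 1) - xtPotential (v.val + 1)| ≤ 1 := fun u v hadj =>
    abs_xtPotential_sub_le_of_xtAdjLbl (Nat.succ_pos _) (Nat.succ_pos _) hadj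
  exact ((connected h).preconnected x y).abs_sub_le_dist _ hf

theorem exists_two_mul_sub_three_le_dist (hl : 2 ≤ l) :
    ∃ x y : Fin (2 ^ l - 1), 2 * l - 3 ≤ (xTree l).dist x y := by
  obtain ⟨m, rfl⟩ : ∃ m, l = m + 1 + 1 := ⟨l - 2, by omega⟩
  have hpow : 2 ≤ 2 ^ (m + 1) := Nat.le_self_pow (by omega) 2
  have h : 0 < 2 ^ (m + 1 + 1) - 1 := by omega
  have hleft : xtPotential (2 ^ (m + 1)) = -(m + 1 : ℕ) := by
    simp [xtPotential, offsetWeight, Nat.log_pow]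
  have hright : xtPotential (2 ^ (m + 1 + 1) - 1) = (m : ℤ) := by
    have hlog : Nat.log 2 (2 ^ (m + 1 + 1) - 1) = m + 1 :=
      Nat.log_eq_of_pow_le_of_lt_pow (by omega) (by omega)
    rw [xtPotential, hlog, show 2 ^ (m + 1 + 1) - 1 - 2 ^ (m + 1) = 2 ^ (m + 1) - 1 by omega,
      offsetWeight_two_pow_sub_one (by omega)]
    push_cast
    omega
  refine ⟨⟨2 ^ (m + 1) - 1, by omega⟩, ⟨2 ^ (m + 1 + 1) - 2, by omega⟩, ?_⟩
  have hd :=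
    abs_xtPotential_sub_le_dist h ⟨2 ^ (m + 1) - 1, by omega⟩ ⟨2 ^ (m + 1 + 1) - 2, by omega⟩
  simp only [show 2 ^ (m + 1) - 1 + 1 = 2 ^ (m + 1) by omega,
    show 2 ^ (m + 1 + 1) - 2 + 1 = 2 ^ (m + 1 + 1) - 1 by omega, hleft, hright] at hd
  rw [abs_le] at hd
  omega

end xTree

theorem dil_star_xTree (l n : ℕ) (hl : 3 ≤ l) (hn : n = 2 ^ l - 1) :
    (∀ f : Fin n ≃ Fin (2 ^ l - 1), ∃ u v : Fin n, (_root_.starGraph n).Adj u v ∧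
      l - 1 ≤ (xTree l).dist (f u) (f v)) ∧
    (∃ f : Fin n ≃ Fin (2 ^ l - 1), ∀ u v : Fin n, (_root_.starGraph n).Adj u v →
      (xTree l).dist (f u) (f v) ≤ l - 1) := by
  subst hn
  have h : 0 < 2 ^ l - 1 := Nat.sub_pos_of_lt (Nat.one_lt_two_pow (by omega))
  let centre : Fin (2 ^ l - 1) := ⟨0, h⟩
  constructor
  · intro f
    obtain ⟨x, y, hxy⟩ := xTree.exists_two_mul_sub_three_le_dist (l := l) (by omega)
    have hfar : ∀ w, l - 1 ≤ (xTree l).dist (f centre) w →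
        (_root_.starGraph _).Adj centre (f.symm w) := fun w hw =>
      ⟨fun he => by rw [he, Equiv.apply_symm_apply, dist_self] at hw; omega, .inl rfl⟩
    rcases (xTree.connected h).le_dist_or_le_dist (k := l - 1) (u := x) (v := y) (by omega)
      (f centre) with hx | hx
    · exact ⟨centre, f.symm x, hfar x hx, by rwa [Equiv.apply_symm_apply]⟩
    · exact ⟨centre, f.symm y, hfar y hx, by rwa [Equiv.apply_symm_apply]⟩
  · refine ⟨Equiv.refl _, ?_⟩
    rintro u v ⟨-, hu | hv⟩
    · rw [show u = centre from Fin.ext hu]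
      exact xTree.dist_root_le h v
    · rw [show v = centre from Fin.ext hv, SimpleGraph.dist_comm]
      exact xTree.dist_root_le h u
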